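/- Define f : T𝕊² → Tℝ³ by f(p,V) = (p, −p×V), where T𝕊² = {(p,V) ∈ ℝ³×ℝ³ : |p|=1, ⟨p,V⟩=0}. For tangent vectors X = (X₁,X₂) to T𝕊² at (p,V), the derivative is df(X) = (X₁, −X₁×V − p×X₂), and f is an isometric embedding from (T𝕊², 𝔾) to (Tℝ³, G), where 𝔾_{(p,V)}(X,Y) = ⟨X₂, p×Y₁⟩ − ⟨X₁, p×Y₂⟩ and G((X₁,X₂),(Y₁,Y₂)) = ⟨X₁,Y₂⟩+⟨X₂,Y₁⟩. -/
import Mathlib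


/-- The neutral metric on `Tℝ³ ≅ ℝ³ × ℝ³`. -/
def neutralG3 (X Y : (Fin 3 → ℝ) × (Fin 3 → ℝ)) : ℝ :=
  (∑ i, X.1 i * Y.2 i) + ∑ i, X.2 i * Y.1 i

/-- The map `f : T𝕊² → Tℝ³`, `f(p,V) = (p, −p×V)`, is injective on
`T𝕊² = {(p,V) : |p| = 1, ⟨p,V⟩ = 0}`, and for tangent vectors `X = (X₁,X₂)`,
`Y = (Y₁,Y₂)` to `T𝕊²` at `(p,V)`, with `df(X) = (X₁, −X₁×V − p×X₂)`, it pulls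
the neutral metric `G` back to `𝔾(X,Y) = ⟨X₂, p×Y₁⟩ − ⟨X₁, p×Y₂⟩`: `f` is an
isometric embedding of `(T𝕊², 𝔾)` into `(Tℝ³, G)`. -/
theorem stmt15 :
    (∀ p V q W : Fin 3 → ℝ, (∑ i, p i ^ 2 = 1) → (∑ i, q i ^ 2 = 1) →
      (∑ i, p i * V i = 0) → (∑ i, q i * W i = 0) →
      ((p, -(crossProduct p V)) : (Fin 3 → ℝ) × (Fin 3 → ℝ)) = (q, -(crossProduct q W)) →
      ((p, V) : (Fin 3 → ℝ) × (Fin 3 → ℝ)) = (q, W)) ∧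
    (∀ p V X₁ X₂ Y₁ Y₂ : Fin 3 → ℝ, (∑ i, p i ^ 2 = 1) → (∑ i, p i * V i = 0) →
      (∑ i, X₁ i * p i = 0) → ((∑ i, X₂ i * p i) + ∑ i, X₁ i * V i = 0) →
      (∑ i, Y₁ i * p i = 0) → ((∑ i, Y₂ i * p i) + ∑ i, Y₁ i * V i = 0) →
      neutralG3 (X₁, -(crossProduct X₁ V) - crossProduct p X₂)
          (Y₁, -(crossProduct Y₁ V) - crossProduct p Y₂) =
        (∑ i, X₂ i * crossProduct p Y₁ i) - ∑ i, X₁ i * crossProduct p Y₂ i) := by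
  constructor
  · intro p V q W hp hq hpV hqW h
    rw [Prod.mk.injEq] at h
    obtain ⟨h1, h2⟩ := h
    subst h1
    refine Prod.mk.injEq .. ▸ ⟨rfl, ?_⟩
    have h0 := congrFun h2 0
    have h1' := congrFun h2 1
    have h2' := congrFun h2 2
    simp [cross_apply, Fin.sum_univ_three] at h0 h1' h2' hp hpV hqW
    funext i
    fin_cases i <;> simp
    · linear_combination p 0 * (hpV - hqW) + p 1 * h2' - p 2 * h1' - (V 0 - W 0) * hp
    · linear_combination p 1 * (hpV - hqW) + p 2 * h0 - p 0 * h2' - (V 1 - W 1) * hp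
    · linear_combination p 2 * (hpV - hqW) + p 0 * h1' - p 1 * h0 - (V 2 - W 2) * hp
  · intro p V X₁ X₂ Y₁ Y₂ _ _ _ _ _ _
    simp [neutralG3, cross_apply, Fin.sum_univ_three]
    ring
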